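/- arXiv:1612.08094 — 4 statements merged into one kernel-verified Lean document; each statement's English description precedes it below -/
import Mathlib

section
/- Let H and Y be real Hilbert spaces, R > 0, and W : H → Y a bounded linear operator satisfying the isometry property ⟨W f₁, W f₂⟩_Y = (R/2)⟨f₁, f₂⟩_H for all f₁, f₂ ∈ H. Let X_N ⊆ H be a finite-dimensional subspace, let f⁰ ∈ H, δ ≥ 0 and g ∈ Y satisfy ‖W f⁰ − g‖_Y ≤ δ. If f_N ∈ X_N minimizes h ↦ ‖W h − g‖_Y over X_N, then ‖f_N − f⁰‖_H ≤ inf{‖h − f⁰‖_H : h ∈ X_N} + √(2/R)·δ. -/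
/-- Error estimate for the Galerkin least squares method:
if `W` satisfies the isometry property `⟪W f₁, W f₂⟫ = (R/2) ⟪f₁, f₂⟫`, `‖W f⁰ - g‖ ≤ δ`
and `f_N ∈ X_N` minimizes `h ↦ ‖W h - g‖` over the finite-dimensional subspace `X_N`, then
`‖f_N - f⁰‖ ≤ inf {‖h - f⁰‖ : h ∈ X_N} + √(2/R) δ`. -/
theorem galerkin_error_estimate
    {H Y : Type*} [NormedAddCommGroup H] [InnerProductSpace ℝ H] [CompleteSpace H]
    [NormedAddCommGroup Y] [InnerProductSpace ℝ Y] [CompleteSpace Y]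
    (R : ℝ) (hR : 0 < R) (W : H →L[ℝ] Y)
    (hW : ∀ f₁ f₂ : H, (inner ℝ (W f₁) (W f₂) : ℝ) = (R / 2) * inner ℝ f₁ f₂)
    (X : Submodule ℝ H) (hX : FiniteDimensional ℝ X)
    (f0 : H) (δ : ℝ) (hδ : 0 ≤ δ) (g : Y) (hg : ‖W f0 - g‖ ≤ δ)
    (fN : H) (hfN : fN ∈ X) (hmin : ∀ h ∈ X, ‖W fN - g‖ ≤ ‖W h - g‖) :
    ‖fN - f0‖ ≤ (⨅ h : X, ‖(h : H) - f0‖) + Real.sqrt (2 / R) * δ := by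
  haveI : CompleteSpace X := FiniteDimensional.complete ℝ X
  -- norm relation ‖f‖ = √(2/R) ‖W f‖
  have hnorm : ∀ f : H, ‖f‖ = Real.sqrt (2 / R) * ‖W f‖ := by
    intro f
    have h1 := hW f f
    rw [real_inner_self_eq_norm_sq, real_inner_self_eq_norm_sq] at h1
    have h2 : ‖f‖ ^ 2 = (2 / R) * ‖W f‖ ^ 2 := by
      field_simp at h1 ⊢; linarith
    have h3 : ‖f‖ = Real.sqrt ((2 / R) * ‖W f‖ ^ 2) := by
      rw [← h2, Real.sqrt_sq (norm_nonneg f)]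
    rw [h3, Real.sqrt_mul (by positivity), Real.sqrt_sq (norm_nonneg _)]
  -- orthogonality of residual: ⟪W fN - g, W w⟫ = 0 for w ∈ X
  have orth : ∀ w ∈ X, (inner ℝ (W fN - g) (W w) : ℝ) = 0 := by
    intro w hw
    by_cases hWw : W w = 0
    · simp [hWw]
    have key : ∀ t : ℝ, 0 ≤ 2 * t * (inner ℝ (W fN - g) (W w) : ℝ) + t ^ 2 * ‖W w‖ ^ 2 := by
      intro t
      have h1 := hmin (fN + t • w) (X.add_mem hfN (X.smul_mem t hw))
      have h2 : ‖W fN - g‖ ^ 2 ≤ ‖W (fN + t • w) - g‖ ^ 2 := by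
        exact pow_le_pow_left₀ (norm_nonneg _) h1 2
      have h3 : W (fN + t • w) - g = (W fN - g) + t • W w := by
        simp [map_add, map_smul]; abel
      rw [h3, norm_add_sq_real, real_inner_smul_right, norm_smul, mul_pow,
        Real.norm_eq_abs, sq_abs] at h2
      linarith
    set b : ℝ := (inner ℝ (W fN - g) (W w) : ℝ) with hb
    set a : ℝ := ‖W w‖ ^ 2 with hadef
    have ha : (0:ℝ) < a := by
      have := norm_pos_iff.mpr hWw
      positivity
    have hkey := key (-b / a)
    have heq : 2 * (-b / a) * b + (-b / a) ^ 2 * a = -b ^ 2 / a := by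
      field_simp; ring
    rw [heq] at hkey
    have h2 : 0 ≤ (-b ^ 2 / a) * a := mul_nonneg hkey ha.le
    have h3 : (-b ^ 2 / a) * a = -b ^ 2 := by field_simp
    nlinarith [sq_nonneg b]
  -- the projection h* of f0 on X
  set hs : H := X.starProjection f0 with hhs
  have hperp : ∀ w ∈ X, (inner ℝ (f0 - hs) w : ℝ) = 0 := fun w hw =>
    Submodule.starProjection_inner_eq_zero f0 w hw
  set w : H := fN - hs with hwdef
  have hwX : w ∈ X := X.sub_mem hfN (X.starProjection_apply_mem f0)
  -- ‖W w‖ ≤ δ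
  have hWwle : ‖W w‖ ≤ δ := by
    have e1 : (inner ℝ (W w) (W w) : ℝ)
        = inner ℝ (W fN - g) (W w) + inner ℝ (g - W f0) (W w) + inner ℝ (W f0 - W hs) (W w) := by
      rw [← inner_add_left, ← inner_add_left]
      congr 1
      have : W w = W fN - W hs := by rw [hwdef, map_sub]
      rw [this]; abel
    rw [orth w hwX] at e1
    have e2 : (inner ℝ (W f0 - W hs) (W w) : ℝ) = 0 := by
      rw [← map_sub, hW]
      rw [hperp w hwX]; ring
    rw [e2] at e1
    have e3 : ‖W w‖ ^ 2 ≤ δ * ‖W w‖ := by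
      have := real_inner_le_norm (g - W f0) (W w)
      have hle : ‖g - W f0‖ ≤ δ := by rwa [norm_sub_rev]
      have := real_inner_self_eq_norm_sq (W w)
      nlinarith [norm_nonneg (W w), real_inner_le_norm (g - W f0) (W w)]
    by_cases h0 : ‖W w‖ = 0
    · rw [h0]; exact hδ
    · have hpos : 0 < ‖W w‖ := lt_of_le_of_ne (norm_nonneg _) (Ne.symm h0)
      nlinarith
  -- ‖fN - hs‖ ≤ √(2/R) δ
  have h4 : ‖fN - hs‖ ≤ Real.sqrt (2 / R) * δ := by
    rw [← hwdef, hnorm w]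
    exact mul_le_mul_of_nonneg_left hWwle (Real.sqrt_nonneg _)
  -- inf part
  have h5 : ‖hs - f0‖ = ⨅ h : X, ‖(h : H) - f0‖ := by
    rw [norm_sub_rev, Submodule.starProjection_minimal]
    congr 1; funext h; rw [norm_sub_rev]
  calc ‖fN - f0‖ ≤ ‖fN - hs‖ + ‖hs - f0‖ := by
        have : fN - f0 = (fN - hs) + (hs - f0) := by abel
        rw [this]; exact norm_add_le _ _
    _ ≤ Real.sqrt (2 / R) * δ + (⨅ h : X, ‖(h : H) - f0‖) := by
        rw [← h5]; exact add_le_add h4 (le_refl _)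
    _ = (⨅ h : X, ‖(h : H) - f0‖) + Real.sqrt (2 / R) * δ := by ring
end

section
/- Let H and Y be real Hilbert spaces, R > 0, and W : H → Y a bounded linear operator satisfying the isometry property ⟨W f₁, W f₂⟩_Y = (R/2)⟨f₁, f₂⟩_H for all f₁, f₂ ∈ H. Let X_N ⊆ H be a finite-dimensional subspace, f⁰ ∈ H, δ ≥ 0 and g ∈ Y with ‖W f⁰ − g‖_Y ≤ δ. If f_N^δ ∈ X_N minimizes h ↦ ‖W h − g‖_Y over X_N and f_N^0 ∈ X_N minimizes h ↦ ‖W h − W f⁰‖_Y over X_N, then ‖f_N^δ − f_N^0‖_H ≤ √(2/R)·δ. -/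
lemma ortho_of_min {Y : Type*} [NormedAddCommGroup Y] [InnerProductSpace ℝ Y]
    (u v : Y) (h : ∀ t : ℝ, ‖u‖ ≤ ‖u + t • v‖) : (inner ℝ u v : ℝ) = 0 := by
  by_contra hne
  set a : ℝ := inner ℝ u v with ha
  set b : ℝ := ‖v‖ ^ 2 with hb
  have hb0 : 0 ≤ b := sq_nonneg _
  have key : ∀ t : ℝ, 0 ≤ 2 * t * a + t ^ 2 * b := by
    intro t
    have h1 := h t
    have h2 : ‖u‖ ^ 2 ≤ ‖u + t • v‖ ^ 2 :=
      pow_le_pow_left₀ (norm_nonneg _) h1 2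
    rw [norm_add_sq_real, real_inner_smul_right, norm_smul] at h2
    have h3 : (‖t‖ * ‖v‖) ^ 2 = t ^ 2 * b := by
      rw [mul_pow, Real.norm_eq_abs, sq_abs]
    rw [h3, ← ha] at h2
    nlinarith [h2]
  have := key (-a / (b + 1))
  have hb1 : 0 < b + 1 := by linarith
  have ha2 : 0 < a ^ 2 := by positivity
  rw [div_pow] at this
  have hc : 2 * (-a / (b + 1)) * a + (-a) ^ 2 / (b + 1) ^ 2 * b
      = (a ^ 2 * (-(b + 2))) / (b + 1) ^ 2 := by
    field_simp; ring
  rw [hc] at this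
  have h4 : 0 ≤ a ^ 2 * -(b + 2) := by
    have h5 := mul_nonneg this (sq_nonneg (b + 1))
    rwa [div_mul_cancel₀] at h5
    positivity
  nlinarith

/-- Stability of the Galerkin least squares method: if `‖W f⁰ - g‖ ≤ δ`,
`f_N^δ` minimizes `h ↦ ‖W h - g‖` over `X_N` and `f_N^0` minimizes `h ↦ ‖W h - W f⁰‖` over
`X_N`, then `‖f_N^δ - f_N^0‖ ≤ √(2/R) δ`. -/
theorem galerkin_stability
    {H Y : Type*} [NormedAddCommGroup H] [InnerProductSpace ℝ H] [CompleteSpace H]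
    [NormedAddCommGroup Y] [InnerProductSpace ℝ Y] [CompleteSpace Y]
    (R : ℝ) (hR : 0 < R) (W : H →L[ℝ] Y)
    (hW : ∀ f₁ f₂ : H, (inner ℝ (W f₁) (W f₂) : ℝ) = (R / 2) * inner ℝ f₁ f₂)
    (X : Submodule ℝ H) (hX : FiniteDimensional ℝ X)
    (f0 : H) (δ : ℝ) (hδ : 0 ≤ δ) (g : Y) (hg : ‖W f0 - g‖ ≤ δ)
    (fNδ : H) (hfNδ : fNδ ∈ X) (hminδ : ∀ h ∈ X, ‖W fNδ - g‖ ≤ ‖W h - g‖)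
    (fN0 : H) (hfN0 : fN0 ∈ X) (hmin0 : ∀ h ∈ X, ‖W fN0 - W f0‖ ≤ ‖W h - W f0‖) :
    ‖fNδ - fN0‖ ≤ Real.sqrt (2 / R) * δ := by
  -- orthogonality relations
  have orthδ : ∀ h ∈ X, (inner ℝ (W fNδ - g) (W h) : ℝ) = 0 := by
    intro h hh
    apply ortho_of_min
    intro t
    have := hminδ (fNδ + t • h) (X.add_mem hfNδ (X.smul_mem t hh))
    simpa [map_add, map_smul, add_sub_right_comm] using this
  have orth0 : ∀ h ∈ X, (inner ℝ (W fN0 - W f0) (W h) : ℝ) = 0 := by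
    intro h hh
    apply ortho_of_min
    intro t
    have := hmin0 (fN0 + t • h) (X.add_mem hfN0 (X.smul_mem t hh))
    simpa [map_add, map_smul, add_sub_right_comm] using this
  set d : H := fNδ - fN0 with hd
  have hdX : d ∈ X := X.sub_mem hfNδ hfN0
  have hWd : W d = W fNδ - W fN0 := by simp [hd]
  -- key inner product computation
  have key : (inner ℝ (W d) (W d) : ℝ) = inner ℝ (g - W f0) (W d) := by
    have e1 := orthδ d hdX
    have e2 := orth0 d hdX
    have : W d = (W fNδ - g) - (W fN0 - W f0) + (g - W f0) := by
      rw [hWd]; abel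
    calc (inner ℝ (W d) (W d) : ℝ)
        = inner ℝ ((W fNδ - g) - (W fN0 - W f0) + (g - W f0)) (W d) := by rw [← this]
      _ = inner ℝ (W fNδ - g) (W d) - inner ℝ (W fN0 - W f0) (W d)
          + inner ℝ (g - W f0) (W d) := by
          rw [inner_add_left, inner_sub_left]
      _ = inner ℝ (g - W f0) (W d) := by rw [e1, e2]; ring
  have hWdnorm : ‖W d‖ ^ 2 = (inner ℝ (W d) (W d) : ℝ) := by
    rw [real_inner_self_eq_norm_sq]
  have hbound : ‖W d‖ ^ 2 ≤ δ * ‖W d‖ := by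
    rw [hWdnorm, key]
    calc (inner ℝ (g - W f0) (W d) : ℝ) ≤ ‖g - W f0‖ * ‖W d‖ := real_inner_le_norm _ _
      _ ≤ δ * ‖W d‖ := by
          apply mul_le_mul_of_nonneg_right _ (norm_nonneg _)
          rwa [norm_sub_rev]
  have hWdδ : ‖W d‖ ≤ δ := by
    rcases eq_or_lt_of_le (norm_nonneg (W d)) with h0 | h0
    · rw [← h0]; exact hδ
    · have := hbound
      nlinarith
  -- translate to H norm
  have hiso : ‖W d‖ ^ 2 = (R / 2) * ‖d‖ ^ 2 := by
    rw [hWdnorm, hW, real_inner_self_eq_norm_sq]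
  have hdsq : ‖d‖ ^ 2 ≤ (2 / R) * δ ^ 2 := by
    have h1 : ‖W d‖ ^ 2 ≤ δ ^ 2 := by nlinarith [norm_nonneg (W d)]
    rw [hiso] at h1
    rw [div_mul_eq_mul_div, le_div_iff₀ hR] at *
    nlinarith
  have : ‖d‖ ≤ Real.sqrt ((2 / R) * δ ^ 2) := by
    rw [← Real.sqrt_sq (norm_nonneg d)]
    exact Real.sqrt_le_sqrt hdsq
  rwa [Real.sqrt_mul (by positivity) _, Real.sqrt_sq hδ] at this
end

section
/- Let d ≥ 1 be an integer, φ ∈ L¹(ℝ^d) ∩ L²(ℝ^d), and suppose there exist constants C, R₀ > 0 and p > d/2 such that |φ̂(ξ)| ≤ C ‖ξ‖^{−p} whenever ‖ξ‖ ≥ R₀. Let (T_N)_{N∈ℕ} be a bounded sequence of positive numbers and (s_N)_{N∈ℕ} a sequence of positive numbers with s_N → 0. Then for every ξ ∈ ℝ^d, Σ_{k∈ℤ^d\{0}} |φ̂(T_N ξ − (2π/s_N)k)|² → 0 as N → ∞. -/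
open MeasureTheory Real Filter

/-- The point of `ℝ^d` with integer coordinates `k`. -/
noncomputable def intVec {d : ℕ} (k : Fin d → ℤ) : EuclideanSpace ℝ (Fin d) :=
  WithLp.toLp 2 (fun i => (k i : ℝ))

/-- Fourier transform `φ̂(ξ) = (2π)^{-d/2} ∫ φ(x) e^{-i⟨ξ,x⟩} dx`. -/
noncomputable def fhat {d : ℕ} (φ : EuclideanSpace ℝ (Fin d) → ℝ)
    (ξ : EuclideanSpace ℝ (Fin d)) : ℂ :=
  (((2 * π) ^ (-(d : ℝ) / 2) : ℝ) : ℂ) *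
    ∫ x : EuclideanSpace ℝ (Fin d),
      (φ x : ℂ) * Complex.exp (-Complex.I * ((inner ℝ ξ x : ℝ) : ℂ))

lemma aux_summable_g {q : ℝ} (hq : 1 < q) :
    Summable (fun n : ℤ => (1 + |(n : ℝ)|) ^ (-q)) := by
  have h1 : Summable (fun n : ℤ => |(n : ℝ)| ^ (-q) + if n = 0 then (1:ℝ) else 0) := by
    refine (summable_abs_int_rpow hq).add ?_
    refine summable_of_ne_finset_zero (s := {0}) fun n hn => ?_
    simp only [Finset.mem_singleton] at hn
    simp [hn]
  refine h1.of_nonneg_of_le (fun n => Real.rpow_nonneg (by positivity) _) fun n => ?_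
  rcases eq_or_ne n 0 with h | h
  · have hq0 : -q ≠ 0 := ne_of_lt (by linarith)
    simp [h, Real.one_rpow, Real.zero_rpow hq0]
  · have hn1 : (1:ℝ) ≤ |(n : ℝ)| := by
      rw [← Int.cast_abs]; exact_mod_cast Int.one_le_abs (by simpa using h)
    have : (1 + |(n:ℝ)|) ^ (-q) ≤ |(n:ℝ)| ^ (-q) :=
      Real.rpow_le_rpow_of_nonpos (by linarith) (by linarith) (by linarith)
    simp [h]; linarith

lemma aux_summable_prod (d : ℕ) (g : ℤ → ℝ) (hg : Summable g) (hg0 : ∀ n, 0 ≤ g n) :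
    Summable (fun k : Fin d → ℤ => ∏ i, g (k i)) := by
  induction d with
  | zero => exact .of_finite
  | succ n ih =>
    have := ((hg.mul_of_nonneg ih hg0 (fun k => Finset.prod_nonneg fun i _ => hg0 _)))
    rw [← (Fin.consEquiv (fun _ : Fin (n+1) => ℤ)).summable_iff]
    refine this.congr fun x => ?_
    simp [Fin.consEquiv, Fin.prod_univ_succ]

lemma intVec_coord_le {d : ℕ} (k : Fin d → ℤ) (i : Fin d) :
    |(k i : ℝ)| ≤ ‖intVec k‖ := by
  rw [EuclideanSpace.norm_eq]
  have h1 : |(k i : ℝ)| = Real.sqrt (‖intVec k i‖ ^ 2) := by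
    rw [Real.sqrt_sq_eq_abs]; simp [intVec]
  rw [h1]
  refine Real.sqrt_le_sqrt ?_
  exact Finset.single_le_sum (f := fun j => ‖intVec k j‖ ^ 2)
    (fun j _ => by positivity) (Finset.mem_univ i)

lemma one_le_norm_intVec {d : ℕ} {k : Fin d → ℤ} (hk : k ≠ 0) : 1 ≤ ‖intVec k‖ := by
  obtain ⟨i, hi⟩ : ∃ i, k i ≠ 0 := by
    by_contra h; push_neg at h; exact hk (funext h)
  refine le_trans ?_ (intVec_coord_le k i)
  rw [← Int.cast_abs]
  exact_mod_cast Int.one_le_abs hi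

lemma key_summable {d : ℕ} (hd : 1 ≤ d) {p2 : ℝ} (h : (d : ℝ) < p2) :
    Summable (fun k : {k : Fin d → ℤ // k ≠ 0} => ‖intVec (k : Fin d → ℤ)‖ ^ (-p2)) := by
  have hd0 : (0:ℝ) < d := by exact_mod_cast hd
  set q : ℝ := p2 / d with hqdef
  have hq : 1 < q := (lt_div_iff₀ hd0).mpr (by linarith)
  have hg := aux_summable_g hq
  have hmaj : Summable (fun k : {k : Fin d → ℤ // k ≠ 0} =>
      (2:ℝ) ^ p2 * ∏ i, (1 + |((k : Fin d → ℤ) i : ℝ)|) ^ (-q)) := by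
    exact (((aux_summable_prod d _ hg (fun n => Real.rpow_nonneg (by positivity) _)).mul_left
      ((2:ℝ) ^ p2)).subtype _)
  refine hmaj.of_nonneg_of_le (fun k => Real.rpow_nonneg (norm_nonneg _) _) fun k => ?_
  obtain ⟨k, hk⟩ := k
  set r : ℝ := ‖intVec k‖ with hrdef
  have hr1 : 1 ≤ r := one_le_norm_intVec hk
  have hr0 : 0 < r := by linarith
  have h2r : 0 < 2 * r := by linarith
  have hprodle : (∏ i, (1 + |(k i : ℝ)|)) ≤ (2 * r) ^ d := by
    calc (∏ i, (1 + |(k i : ℝ)|)) ≤ ∏ _i : Fin d, (2 * r) := by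
          refine Finset.prod_le_prod (fun i _ => by positivity) fun i _ => ?_
          have := intVec_coord_le k i
          rw [← hrdef] at this; linarith
      _ = (2 * r) ^ d := by simp
  have hstep : ((2 * r) ^ d : ℝ) ^ (-q) ≤ (∏ i, (1 + |(k i : ℝ)|)) ^ (-q) :=
    Real.rpow_le_rpow_of_nonpos (Finset.prod_pos fun i _ => by positivity) hprodle
      (by linarith : -q ≤ 0)
  have hprodrpow : (∏ i, (1 + |(k i : ℝ)|)) ^ (-q) = ∏ i, (1 + |(k i : ℝ)|) ^ (-q) :=
    (Real.finset_prod_rpow Finset.univ _ (fun i _ => by positivity) (-q)).symm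
  have hlhs : ((2 * r) ^ d : ℝ) ^ (-q) = 2 ^ (-p2) * r ^ (-p2) := by
    rw [← Real.rpow_natCast (2 * r) d, ← Real.rpow_mul h2r.le]
    have : (d : ℝ) * (-q) = -p2 := by
      rw [hqdef]; field_simp
    rw [this, Real.mul_rpow (by norm_num) hr0.le]
  have hfin : 2 ^ (-p2) * r ^ (-p2) ≤ ∏ i, (1 + |(k i : ℝ)|) ^ (-q) := by
    rw [← hprodrpow, ← hlhs]; exact hstep
  have h2 : (0:ℝ) < 2 ^ (-p2) := Real.rpow_pos_of_pos (by norm_num) _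
  calc r ^ (-p2) = (2:ℝ) ^ p2 * (2 ^ (-p2) * r ^ (-p2)) := by
        rw [← mul_assoc, ← Real.rpow_add (by norm_num : (0:ℝ) < 2)]
        simp
    _ ≤ (2:ℝ) ^ p2 * ∏ i, (1 + |(k i : ℝ)|) ^ (-q) := by
        refine mul_le_mul_of_nonneg_left hfin (Real.rpow_nonneg (by norm_num) _)

/-- **Statement 14.** If `φ ∈ L¹ ∩ L²` has Fourier decay `|φ̂(ξ)| ≤ C ‖ξ‖^{-p}` for
`‖ξ‖ ≥ R₀` with `p > d/2`, `(T_N)` is a bounded positive sequence and `s_N → 0⁺`, then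
`Σ_{k ≠ 0} |φ̂(T_N ξ - (2π/s_N)k)|² → 0` for every `ξ`. -/
theorem offband_sum_tendsto_zero
    {d : ℕ} (hd : 1 ≤ d) (φ : EuclideanSpace ℝ (Fin d) → ℝ)
    (hφ1 : Integrable φ (volume : Measure (EuclideanSpace ℝ (Fin d))))
    (hφ2 : MemLp φ 2 (volume : Measure (EuclideanSpace ℝ (Fin d))))
    (C R₀ p : ℝ) (hC : 0 < C) (hR₀ : 0 < R₀) (hp : (d : ℝ) / 2 < p)
    (hdecay : ∀ ξ : EuclideanSpace ℝ (Fin d), R₀ ≤ ‖ξ‖ →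
      ‖fhat φ ξ‖ ≤ C * ‖ξ‖ ^ (-p))
    (T s : ℕ → ℝ) (hTpos : ∀ N, 0 < T N) (hTbdd : ∃ M : ℝ, ∀ N, T N ≤ M)
    (hspos : ∀ N, 0 < s N) (hs0 : Tendsto s atTop (nhds 0)) :
    ∀ ξ : EuclideanSpace ℝ (Fin d),
      Tendsto (fun N : ℕ =>
          ∑' k : {k : Fin d → ℤ // k ≠ 0},
            ‖fhat φ (T N • ξ - (2 * π / s N) • intVec (k : Fin d → ℤ))‖ ^ 2)
        atTop (nhds 0) := by
  intro ξ
  obtain ⟨M, hM⟩ := hTbdd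
  set A : ℝ := M * ‖ξ‖ with hAdef
  have hM0 : 0 < M := lt_of_lt_of_le (hTpos 0) (hM 0)
  have hA0 : 0 ≤ A := by positivity
  have hTξ : ∀ N, ‖T N • ξ‖ ≤ A := by
    intro N
    rw [norm_smul, Real.norm_eq_abs, abs_of_pos (hTpos N)]
    exact mul_le_mul_of_nonneg_right (hM N) (norm_nonneg _)
  set L : ℕ → ℝ := fun N => 2 * π / s N with hLdef
  have hL : Tendsto L atTop atTop := by
    have h1 : Tendsto s atTop (nhdsWithin 0 (Set.Ioi 0)) := by
      refine tendsto_nhdsWithin_of_tendsto_nhds_of_eventually_within _ hs0 ?_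
      exact Eventually.of_forall fun N => hspos N
    have h2 : Tendsto (fun N => (s N)⁻¹) atTop atTop :=
      tendsto_inv_nhdsGT_zero.comp h1
    have h3 := h2.const_mul_atTop (by positivity : (0:ℝ) < 2 * π)
    refine h3.congr fun N => ?_
    simp only [hLdef, div_eq_mul_inv]
  have hp2 : (d : ℝ) < 2 * p := by linarith
  have hS : Summable (fun k : {k : Fin d → ℤ // k ≠ 0} =>
      ‖intVec (k : Fin d → ℤ)‖ ^ (-(2 * p))) := key_summable hd hp2
  set S : ℝ := ∑' k : {k : Fin d → ℤ // k ≠ 0}, ‖intVec (k : Fin d → ℤ)‖ ^ (-(2 * p))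
    with hSdef
  have hS0 : 0 ≤ S := tsum_nonneg fun k => Real.rpow_nonneg (norm_nonneg _) _
  -- the squeeze
  refine squeeze_zero' (Eventually.of_forall fun N =>
      tsum_nonneg fun k => by positivity)
    ?_ ?_ (g := fun N => C ^ 2 * (L N / 2) ^ (-(2 * p)) * S)
  · filter_upwards [hL.eventually_ge_atTop (max (2 * A) (2 * R₀))] with N hN
    have hLA : 2 * A ≤ L N := le_trans (le_max_left _ _) hN
    have hLR : 2 * R₀ ≤ L N := le_trans (le_max_right _ _) hN
    have hL0 : 0 < L N := by linarith
    have hL2 : 0 < L N / 2 := by linarith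
    -- pointwise bound on each term
    have hterm : ∀ k : {k : Fin d → ℤ // k ≠ 0},
        ‖fhat φ (T N • ξ - L N • intVec (k : Fin d → ℤ))‖ ^ 2 ≤
          C ^ 2 * (L N / 2) ^ (-(2 * p)) * ‖intVec (k : Fin d → ℤ)‖ ^ (-(2 * p)) := by
      rintro ⟨k, hk⟩
      set r : ℝ := ‖intVec k‖ with hrdef
      have hr1 : 1 ≤ r := one_le_norm_intVec hk
      set v := T N • ξ - L N • intVec k with hvdef
      have hlow : L N / 2 * r ≤ ‖v‖ := by
        have h1 : ‖L N • intVec k‖ - ‖T N • ξ‖ ≤ ‖v‖ := by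
          rw [hvdef, norm_sub_rev]; exact norm_sub_norm_le _ _
        have h2 : ‖L N • intVec k‖ = L N * r := by
          rw [norm_smul, Real.norm_eq_abs, abs_of_pos hL0]
        have h3 : ‖T N • ξ‖ ≤ A := hTξ N
        nlinarith [hTξ N]
      have hvR : R₀ ≤ ‖v‖ := by nlinarith
      have hv0 : 0 < ‖v‖ := lt_of_lt_of_le hR₀ hvR
      have hdec := hdecay v hvR
      have habs0 : 0 ≤ ‖fhat φ v‖ := norm_nonneg _
      have hsq : ‖fhat φ v‖ ^ 2 ≤ (C * ‖v‖ ^ (-p)) ^ 2 := by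
        exact pow_le_pow_left₀ habs0 hdec 2
      have hsq2 : (C * ‖v‖ ^ (-p)) ^ 2 = C ^ 2 * ‖v‖ ^ (-(2 * p)) := by
        rw [mul_pow, sq (‖v‖ ^ (-p)), ← Real.rpow_add hv0]
        ring_nf
      have hmono : ‖v‖ ^ (-(2 * p)) ≤ (L N / 2 * r) ^ (-(2 * p)) :=
        Real.rpow_le_rpow_of_nonpos (by positivity) hlow (by linarith)
      have hmul : (L N / 2 * r) ^ (-(2 * p)) =
          (L N / 2) ^ (-(2 * p)) * r ^ (-(2 * p)) :=
        Real.mul_rpow hL2.le (by linarith)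
      calc ‖fhat φ v‖ ^ 2 ≤ C ^ 2 * ‖v‖ ^ (-(2 * p)) := by
            rw [← hsq2]; exact hsq
        _ ≤ C ^ 2 * ((L N / 2) ^ (-(2 * p)) * r ^ (-(2 * p))) := by
            rw [← hmul]
            exact mul_le_mul_of_nonneg_left hmono (by positivity)
        _ = C ^ 2 * (L N / 2) ^ (-(2 * p)) * r ^ (-(2 * p)) := by ring
    have hmajsum : Summable (fun k : {k : Fin d → ℤ // k ≠ 0} =>
        C ^ 2 * (L N / 2) ^ (-(2 * p)) * ‖intVec (k : Fin d → ℤ)‖ ^ (-(2 * p))) :=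
      hS.mul_left _
    have hfsum : Summable (fun k : {k : Fin d → ℤ // k ≠ 0} =>
        ‖fhat φ (T N • ξ - L N • intVec (k : Fin d → ℤ))‖ ^ 2) :=
      hmajsum.of_nonneg_of_le (fun k => by positivity) hterm
    calc (∑' k : {k : Fin d → ℤ // k ≠ 0},
            ‖fhat φ (T N • ξ - (2 * π / s N) • intVec (k : Fin d → ℤ))‖ ^ 2)
        ≤ ∑' k : {k : Fin d → ℤ // k ≠ 0},
            C ^ 2 * (L N / 2) ^ (-(2 * p)) * ‖intVec (k : Fin d → ℤ)‖ ^ (-(2 * p)) :=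
          Summable.tsum_le_tsum hterm hfsum hmajsum
      _ = C ^ 2 * (L N / 2) ^ (-(2 * p)) * S := by
          rw [hSdef, tsum_mul_left]
  · have h1 : Tendsto (fun N => L N / 2) atTop atTop :=
      hL.atTop_div_const (by norm_num)
    have h2 : Tendsto (fun N => (L N / 2) ^ (-(2 * p))) atTop (nhds 0) :=
      (tendsto_rpow_neg_atTop (by linarith : 0 < 2 * p)).comp h1
    have h3 := (h2.const_mul (C ^ 2)).mul_const S
    simpa using h3
end

section
/- Let d ≥ 1 be an integer, φ ∈ L¹(ℝ^d) ∩ L²(ℝ^d), and suppose there exist constants C, R₀ > 0 and p > d/2 such that |φ̂(ξ)| ≤ C ‖ξ‖^{−p} whenever ‖ξ‖ ≥ R₀. Let (T_N)_{N∈ℕ} be a bounded sequence of positive numbers and (s_N)_{N∈ℕ} a sequence of positive numbers with s_N → 0. Then for every ξ ∈ ℝ^d with liminf_{N→∞} |φ̂(T_N ξ)| > 0, one has E_φ(s_N, T_N ξ) → 0 as N → ∞. -/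
open MeasureTheory Real Filter

/-- `E_φ(s, η) = 1 - |φ̂(η)|² / Σ_k |φ̂(η + (2π/s)k)|²`. -/
noncomputable def Ephi {d : ℕ} (φ : EuclideanSpace ℝ (Fin d) → ℝ) (s : ℝ)
    (η : EuclideanSpace ℝ (Fin d)) : ℝ :=
  1 - ‖fhat φ η‖ ^ 2 /
    ∑' k : Fin d → ℤ, ‖fhat φ (η + (2 * π / s) • intVec k)‖ ^ 2

lemma aux1 {q : ℝ} (hq : 1/2 < q) :
    Summable (fun n : ℤ => (1 + (n : ℝ)^2) ^ (-q)) := by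
  apply Summable.of_norm_bounded_eventually (g := fun n : ℤ => |(n : ℝ)| ^ (-(2*q)))
    (summable_abs_int_rpow (by linarith))
  have : ({0} : Set ℤ).Finite := Set.finite_singleton 0
  filter_upwards [this.eventually_cofinite_notMem] with n hn
  have hn0 : (n : ℝ) ≠ 0 := Int.cast_ne_zero.mpr (by simpa using hn)
  have h1 : (0:ℝ) < |(n:ℝ)| := abs_pos.mpr hn0
  have h2 : |(n:ℝ)|^2 ≤ 1 + (n:ℝ)^2 := by nlinarith [sq_abs (n:ℝ)]
  rw [Real.norm_eq_abs, abs_of_nonneg (Real.rpow_nonneg (by positivity) _)]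
  calc (1 + (n:ℝ)^2) ^ (-q) ≤ (|(n:ℝ)|^2) ^ (-q) := by
        apply Real.rpow_le_rpow_of_nonpos (by positivity) h2 (by linarith)
    _ = |(n:ℝ)| ^ (-(2*q)) := by
        rw [← Real.rpow_natCast |(n:ℝ)| 2, ← Real.rpow_mul (abs_nonneg _)]
        norm_num

lemma aux2 (d : ℕ) {q : ℝ} (hq : 1/2 < q) :
    Summable (fun k : Fin d → ℤ => ∏ i, (1 + (k i : ℝ)^2) ^ (-q)) := by
  induction d with
  | zero => exact summable_of_finite_support (Set.toFinite _)
  | succ n ih =>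
    have h := (aux1 hq).mul_of_nonneg ih (fun m => Real.rpow_nonneg (by positivity) _)
      (fun k => Finset.prod_nonneg fun i _ => Real.rpow_nonneg (by positivity) _)
    have := ((Fin.consEquiv (fun _ : Fin (n+1) => ℤ)).symm.summable_iff
      (f := fun x : ℤ × (Fin n → ℤ) =>
        (1 + (x.1 : ℝ)^2) ^ (-q) * ∏ i, (1 + (x.2 i : ℝ)^2) ^ (-q))).mpr h
    apply this.congr
    intro k
    simp only [Function.comp_apply, Fin.consEquiv_symm_apply, Fin.prod_univ_succ]
    rfl

lemma norm_intVec_sq {d : ℕ} (k : Fin d → ℤ) :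
    ‖intVec k‖ ^ 2 = ∑ i, ((k i : ℝ)) ^ 2 := by
  rw [EuclideanSpace.norm_eq, Real.sq_sqrt (by positivity)]
  apply Finset.sum_congr rfl
  intro i _
  show ‖(k i : ℝ)‖ ^ 2 = _
  rw [Real.norm_eq_abs, sq_abs]

lemma coord_sq_le {d : ℕ} (k : Fin d → ℤ) (i : Fin d) :
    ((k i : ℝ)) ^ 2 ≤ ‖intVec k‖ ^ 2 := by
  rw [norm_intVec_sq]
  exact Finset.single_le_sum (f := fun j => ((k j : ℝ))^2) (fun j _ => by positivity)
    (Finset.mem_univ i)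

lemma aux3 {d : ℕ} (hd : 1 ≤ d) {p : ℝ} (hp : 0 < p) {k : Fin d → ℤ} (hk : k ≠ 0) :
    ‖intVec k‖ ^ (-(2*p)) ≤ 2 ^ p * ∏ i, (1 + (k i : ℝ)^2) ^ (-(p/(d:ℝ))) := by
  set t := ‖intVec k‖ with ht
  have ht1 : 1 ≤ t := one_le_norm_intVec hk
  have ht0 : (0:ℝ) < t := by linarith
  have hprod : ∏ i, (1 + (k i:ℝ)^2) ≤ (2 * t^2)^d := by
    calc ∏ i, (1 + (k i:ℝ)^2) ≤ ∏ _i : Fin d, (2 * t^2) := by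
          apply Finset.prod_le_prod (fun i _ => by positivity)
          intro i _
          have := coord_sq_le k i
          nlinarith
      _ = (2 * t^2)^d := by rw [Finset.prod_const, Finset.card_univ, Fintype.card_fin]
  have hd0 : (0:ℝ) < d := by exact_mod_cast Nat.lt_of_lt_of_le Nat.zero_lt_one hd
  have key : ((2 * t^2)^(d:ℕ) : ℝ) ^ (-(p/(d:ℝ))) ≤ (∏ i, (1 + (k i:ℝ)^2)) ^ (-(p/(d:ℝ))) := by
    apply Real.rpow_le_rpow_of_nonpos (by positivity) hprod
    apply neg_nonpos_of_nonneg
    positivity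
  have lhs_eq : ((2 * t^2)^(d:ℕ) : ℝ) ^ (-(p/(d:ℝ))) = 2^(-p) * t^(-(2*p)) := by
    rw [← Real.rpow_natCast (2 * t^2) d, ← Real.rpow_mul (by positivity)]
    have : (d:ℝ) * -(p/(d:ℝ)) = -p := by field_simp
    rw [this, Real.mul_rpow (by norm_num) (by positivity), ← Real.rpow_natCast t 2,
      ← Real.rpow_mul (le_of_lt ht0)]
    norm_num
  have rhs_eq : (∏ i, (1 + (k i:ℝ)^2)) ^ (-(p/(d:ℝ))) = ∏ i, (1 + (k i:ℝ)^2) ^ (-(p/(d:ℝ))) :=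
    (Real.finset_prod_rpow _ _ (fun i _ => by positivity) _).symm
  rw [lhs_eq, rhs_eq] at key
  calc t ^ (-(2*p)) = 2^p * (2^(-p) * t^(-(2*p))) := by
        rw [← mul_assoc, ← Real.rpow_add (by norm_num : (0:ℝ) < 2)]
        simp
    _ ≤ 2^p * ∏ i, (1 + (k i:ℝ)^2) ^ (-(p/(d:ℝ))) := by
        apply mul_le_mul_of_nonneg_left key (Real.rpow_nonneg (by norm_num) _)

set_option maxHeartbeats 2000000 in
/-- **Statement 15.** If `φ ∈ L¹ ∩ L²` has Fourier decay `|φ̂(ξ)| ≤ C ‖ξ‖^{-p}` for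
`‖ξ‖ ≥ R₀` with `p > d/2`, `(T_N)` is a bounded positive sequence and `s_N → 0⁺`, then for
every `ξ` with `liminf_N |φ̂(T_N ξ)| > 0` one has `E_φ(s_N, T_N ξ) → 0`. -/
theorem Ephi_tendsto_zero_of_decay
    {d : ℕ} (hd : 1 ≤ d) (φ : EuclideanSpace ℝ (Fin d) → ℝ)
    (hφ1 : Integrable φ (volume : Measure (EuclideanSpace ℝ (Fin d))))
    (hφ2 : MemLp φ 2 (volume : Measure (EuclideanSpace ℝ (Fin d))))
    (C R₀ p : ℝ) (hC : 0 < C) (hR₀ : 0 < R₀) (hp : (d : ℝ) / 2 < p)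
    (hdecay : ∀ ξ : EuclideanSpace ℝ (Fin d), R₀ ≤ ‖ξ‖ →
      ‖fhat φ ξ‖ ≤ C * ‖ξ‖ ^ (-p))
    (T s : ℕ → ℝ) (hTpos : ∀ N, 0 < T N) (hTbdd : ∃ M : ℝ, ∀ N, T N ≤ M)
    (hspos : ∀ N, 0 < s N) (hs0 : Tendsto s atTop (nhds 0)) :
    ∀ ξ : EuclideanSpace ℝ (Fin d),
      0 < Filter.liminf (fun N : ℕ => ‖fhat φ (T N • ξ)‖) atTop →
        Tendsto (fun N : ℕ => Ephi φ (s N) (T N • ξ)) atTop (nhds 0) := by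
  intro ξ hξ
  have hd0 : (0:ℝ) < d := by exact_mod_cast Nat.lt_of_lt_of_le Nat.zero_lt_one hd
  have hp0 : 0 < p := lt_trans (by positivity) hp
  have hq : 1/2 < p / d := by rw [div_lt_div_iff₀ (by norm_num) hd0]; linarith
  -- the abbreviations
  set a : ℕ → ℝ := fun N => ‖fhat φ (T N • ξ)‖ with ha
  obtain ⟨M, hM⟩ := hTbdd
  set B : ℝ := M * ‖ξ‖ with hB
  have hηB : ∀ N, ‖T N • ξ‖ ≤ B := by
    intro N
    rw [norm_smul, Real.norm_eq_abs, abs_of_pos (hTpos N)]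
    exact mul_le_mul_of_nonneg_right (hM N) (norm_nonneg ξ)
  set L : ℝ := Filter.liminf (fun N : ℕ => ‖fhat φ (T N • ξ)‖) atTop with hLdef
  have hL : 0 < L := hξ
  set A : ℝ := ∑' k : Fin d → ℤ, ∏ i, (1 + (k i : ℝ)^2) ^ (-(p/(d:ℝ))) with hAdef
  have hA : Summable (fun k : Fin d → ℤ => ∏ i, (1 + (k i : ℝ)^2) ^ (-(p/(d:ℝ)))) := aux2 d hq
  have hA0 : 0 ≤ A :=
    tsum_nonneg fun k => Finset.prod_nonneg fun i _ => Real.rpow_nonneg (by positivity) _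
  set K : ℝ := C^2 * 2^p * A with hKdef
  have hK0 : 0 ≤ K := by positivity
  -- π / s N → ∞
  have hr : Tendsto (fun N => π / s N) atTop atTop := by
    have hs' : Tendsto s atTop (nhdsWithin 0 (Set.Ioi 0)) :=
      tendsto_nhdsWithin_of_tendsto_nhds_of_eventually_within s hs0
        (Eventually.of_forall fun N => hspos N)
    have := (tendsto_inv_nhdsGT_zero).comp hs'
    have h2 := Tendsto.const_mul_atTop pi_pos this
    refine h2.congr fun N => ?_
    rw [div_eq_mul_inv]
    rfl
  -- the key per-N estimates
  have key : ∀ N, max R₀ B ≤ π / s N → L/2 < a N →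
      0 ≤ Ephi φ (s N) (T N • ξ) ∧
      Ephi φ (s N) (T N • ξ) ≤ K * (π / s N) ^ (-(2*p)) / ((L/2)^2) := by
    intro N hN haN
    set r : ℝ := π / s N with hrdef
    have hrR : R₀ ≤ r := le_trans (le_max_left _ _) hN
    have hrB : B ≤ r := le_trans (le_max_right _ _) hN
    have hr0 : 0 < r := lt_of_lt_of_le hR₀ hrR
    have h2r : 2 * π / s N = 2 * r := by rw [hrdef, mul_div_assoc]
    set η : EuclideanSpace ℝ (Fin d) := T N • ξ with hη
    set f : (Fin d → ℤ) → ℝ :=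
      fun k => ‖fhat φ (η + (2 * π / s N) • intVec k)‖ ^ 2 with hf
    set m : (Fin d → ℤ) → ℝ :=
      fun k => (C^2 * 2^p * r^(-(2*p))) * ∏ i, (1 + (k i : ℝ)^2) ^ (-(p/(d:ℝ))) with hm
    have hm0 : ∀ k, 0 ≤ m k := fun k => by
      apply mul_nonneg (by positivity)
      exact Finset.prod_nonneg fun i _ => Real.rpow_nonneg (by positivity) _
    have hmS : Summable m := hA.mul_left _
    have hmt : ∑' k, m k = C^2 * 2^p * r^(-(2*p)) * A := tsum_mul_left
    -- pointwise bound for k ≠ 0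
    have hbound : ∀ k : Fin d → ℤ, k ≠ 0 → f k ≤ m k := by
      intro k hk
      have hv1 : 1 ≤ ‖intVec k‖ := one_le_norm_intVec hk
      have hnorm : r * ‖intVec k‖ ≤ ‖η + (2 * π / s N) • intVec k‖ := by
        rw [h2r]
        have h1 : ‖(2*r) • intVec k‖ - ‖η‖ ≤ ‖η + (2*r) • intVec k‖ := by
          have := norm_add_le (η + (2*r) • intVec k) (-η)
          simp only [add_neg_cancel_comm, norm_neg] at this
          linarith
        rw [norm_smul, Real.norm_eq_abs, abs_of_pos (by linarith : (0:ℝ) < 2*r)] at h1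
        have hηr : ‖η‖ ≤ r := le_trans (hηB N) hrB
        nlinarith
      have hRle : R₀ ≤ ‖η + (2 * π / s N) • intVec k‖ :=
        le_trans (le_trans hrR (by nlinarith)) hnorm
      have hpos : (0:ℝ) < ‖η + (2 * π / s N) • intVec k‖ := lt_of_lt_of_le hR₀ hRle
      have h1 := hdecay _ hRle
      have h2 : f k ≤ (C * ‖η + (2 * π / s N) • intVec k‖ ^ (-p))^2 := by
        apply pow_le_pow_left₀ (norm_nonneg _) h1
      have h3 : (C * ‖η + (2 * π / s N) • intVec k‖ ^ (-p))^2
          = C^2 * ‖η + (2 * π / s N) • intVec k‖ ^ (-(2*p)) := by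
        rw [mul_pow]
        congr 1
        rw [← Real.rpow_natCast (‖η + (2 * π / s N) • intVec k‖ ^ (-p)) 2,
          ← Real.rpow_mul (le_of_lt hpos)]
        congr 1
        push_cast
        ring
      have h4 : ‖η + (2 * π / s N) • intVec k‖ ^ (-(2*p)) ≤ (r * ‖intVec k‖) ^ (-(2*p)) :=
        Real.rpow_le_rpow_of_nonpos (by positivity) hnorm (by linarith)
      have h5 : (r * ‖intVec k‖) ^ (-(2*p)) = r^(-(2*p)) * ‖intVec k‖^(-(2*p)) :=
        Real.mul_rpow (le_of_lt hr0) (norm_nonneg _)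
      have h6 := aux3 hd hp0 hk
      calc f k ≤ C^2 * ‖η + (2 * π / s N) • intVec k‖ ^ (-(2*p)) := by rw [← h3]; exact h2
        _ ≤ C^2 * (r^(-(2*p)) * ‖intVec k‖^(-(2*p))) := by
            rw [← h5]; exact mul_le_mul_of_nonneg_left h4 (by positivity)
        _ ≤ C^2 * (r^(-(2*p)) * (2^p * ∏ i, (1 + (k i : ℝ)^2) ^ (-(p/(d:ℝ))))) := by
            apply mul_le_mul_of_nonneg_left _ (by positivity)
            exact mul_le_mul_of_nonneg_left h6 (Real.rpow_nonneg (le_of_lt hr0) _)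
        _ = m k := by rw [hm]; ring
    have hiv0 : intVec (0 : Fin d → ℤ) = 0 := by
      ext i
      show ((0:ℤ):ℝ) = (0 : EuclideanSpace ℝ (Fin d)) i
      norm_num
    have hz : η + (2 * π / s N) • intVec (0 : Fin d → ℤ) = η := by
      rw [hiv0, smul_zero, add_zero]
    have hf0 : f 0 = a N ^ 2 := by
      show ‖fhat φ (η + (2 * π / s N) • intVec (0 : Fin d → ℤ))‖ ^ 2 = a N ^ 2
      rw [hz]
    have hfnn : ∀ k, 0 ≤ f k := fun k => by
      show (0:ℝ) ≤ ‖fhat φ (η + (2 * π / s N) • intVec k)‖ ^ 2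
      positivity
    -- decompose f
    set f₂ : (Fin d → ℤ) → ℝ := fun k => if k = 0 then 0 else f k with hf₂
    have hf₂S : Summable f₂ := by
      apply Summable.of_nonneg_of_le (fun k => by by_cases h : k = 0 <;> simp [hf₂, h, hfnn k])
        _ hmS
      intro k
      by_cases h : k = 0
      · simp [hf₂, h, hm0]
      · simpa [hf₂, h] using hbound k h
    have hfeq : f = fun k => (if k = 0 then f 0 else 0) + f₂ k := by
      funext k
      by_cases h : k = 0 <;> simp [hf₂, h]
    have hf₁S : Summable (fun k : Fin d → ℤ => if k = 0 then f 0 else 0) :=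
      summable_of_ne_finset_zero (s := {0}) (fun k hk => by
        simp [Finset.mem_singleton] at hk; simp [hk])
    have hfS : Summable f := by rw [hfeq]; exact hf₁S.add hf₂S
    have htsum : ∑' k, f k = f 0 + ∑' k, f₂ k := by
      conv_lhs => rw [hfeq]
      rw [Summable.tsum_add hf₁S hf₂S, tsum_ite_eq]
    have hf₂nn : 0 ≤ ∑' k, f₂ k :=
      tsum_nonneg fun k => by by_cases h : k = 0 <;> simp [hf₂, h, hfnn k]
    have hf₂le : ∑' k, f₂ k ≤ K * r^(-(2*p)) := by
      calc ∑' k, f₂ k ≤ ∑' k, m k := by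
            apply Summable.tsum_le_tsum _ hf₂S hmS
            intro k
            by_cases h : k = 0
            · simp [hf₂, h, hm0]
            · simpa [hf₂, h] using hbound k h
        _ = K * r^(-(2*p)) := by rw [hmt, hKdef]; ring
    have hge : a N ^ 2 ≤ ∑' k, f k := by rw [htsum, hf0]; linarith
    have hle : ∑' k, f k ≤ a N ^ 2 + K * r^(-(2*p)) := by rw [htsum, hf0]; linarith
    have haN0 : 0 < a N := lt_of_le_of_lt (by linarith) haN
    have hS0 : 0 < ∑' k, f k := lt_of_lt_of_le (pow_pos haN0 2) hge
    have hE : Ephi φ (s N) (T N • ξ) = 1 - a N ^ 2 / ∑' k, f k := rfl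
    constructor
    · rw [hE, sub_nonneg]
      exact div_le_one_of_le₀ hge (le_of_lt hS0)
    · rw [hE, one_sub_div (ne_of_gt hS0)]
      exact div_le_div₀ (mul_nonneg hK0 (Real.rpow_nonneg hr0.le _)) (by linarith)
        (pow_pos (by linarith) 2) (by nlinarith)
  have ev1 : ∀ᶠ N in atTop, L/2 < a N :=
    eventually_lt_of_lt_liminf (by linarith)
      (isBoundedUnder_of ⟨0, fun N => norm_nonneg _⟩)
  have ev2 : ∀ᶠ N in atTop, max R₀ B ≤ π / s N := hr.eventually_ge_atTop _
  have htend : Tendsto (fun N => K * (π / s N) ^ (-(2*p)) / ((L/2)^2)) atTop (nhds 0) := by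
    have h1 : Tendsto (fun N => (π / s N) ^ (-(2*p))) atTop (nhds 0) :=
      (tendsto_rpow_neg_atTop (by linarith)).comp hr
    have h2 := (h1.const_mul K).div_const ((L/2)^2)
    simpa using h2
  exact squeeze_zero' (ev1.mp (ev2.mono fun N h2 h1 => (key N h2 h1).1))
    (ev1.mp (ev2.mono fun N h2 h1 => (key N h2 h1).2)) htend
end
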